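/- arXiv:2502.19075 — 6 statements merged into one kernel-verified Lean document; each statement's English description precedes it below -/
import Mathlib

section
/- Let A = ∏_{i∈I} A_i be a finite product of finite linearly ordered sets and f : A → ℝ a supermodular function (f(a ⊔ b) + f(a ⊓ b) ≥ f(a) + f(b) for all a, b, with join and meet taken coordinatewise). Then for every probability distribution μ on A there exists a probability distribution μ* on A such that: (1) for each i, the marginal of μ* on A_i equals the marginal of μ on A_i; (2) the expectation of f under μ* is at least the expectation of f under μ; and (3) the support of μ* is a chain with respect to the coordinatewise partial order. -/
open Finset

set_option linter.unusedSectionVars false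
set_option maxHeartbeats 1000000

section Aux
variable {I : Type*} [Fintype I] [DecidableEq I] {A : I → Type*}
  [∀ i, Fintype (A i)] [∀ i, LinearOrder (A i)]

noncomputable def sfun (a : ∀ i, A i) : ℝ :=
  ∑ i, ((univ.filter fun y => y ≤ a i).card : ℝ)

noncomputable def gfun (a : ∀ i, A i) : ℝ := (sfun a) ^ 2

lemma sfun_lt {a b : ∀ i, A i} (hba : ¬ b ≤ a) : sfun a < sfun (a ⊔ b) := by
  obtain ⟨j, hj⟩ : ∃ j, ¬ b j ≤ a j := by
    by_contra h; push_neg at h; exact hba fun i => h i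
  rw [not_le] at hj
  unfold sfun
  refine Finset.sum_lt_sum (fun i _ => ?_) ⟨j, Finset.mem_univ j, ?_⟩
  · have : (univ.filter fun y => y ≤ a i) ⊆ (univ.filter fun y => y ≤ (a ⊔ b) i) := by
      intro z hz
      simp only [mem_filter, mem_univ, true_and] at hz ⊢
      exact hz.trans (by simp [Pi.sup_apply])
    exact_mod_cast Finset.card_le_card this
  · have hss : (univ.filter fun y => y ≤ a j) ⊂ (univ.filter fun y => y ≤ (a ⊔ b) j) := by
      constructor
      · intro z hz
        simp only [mem_filter, mem_univ, true_and] at hz ⊢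
        exact hz.trans (by simp [Pi.sup_apply])
      · intro hcon
        have := hcon (by simp [Pi.sup_apply] : b j ∈ univ.filter fun y => y ≤ (a ⊔ b) j)
        simp only [mem_filter, mem_univ, true_and] at this
        exact absurd this hj.not_ge
    exact_mod_cast Finset.card_lt_card hss

lemma sfun_add (a b : ∀ i, A i) : sfun (a ⊔ b) + sfun (a ⊓ b) = sfun a + sfun b := by
  unfold sfun
  rw [← Finset.sum_add_distrib, ← Finset.sum_add_distrib]
  refine Finset.sum_congr rfl fun i _ => ?_
  rcases le_total (a i) (b i) with h | h
  · simp [Pi.sup_apply, Pi.inf_apply, sup_eq_right.mpr h, inf_eq_left.mpr h, add_comm]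
  · simp [Pi.sup_apply, Pi.inf_apply, sup_eq_left.mpr h, inf_eq_right.mpr h]

lemma gfun_strict {a b : ∀ i, A i} (hab : ¬ a ≤ b) (hba : ¬ b ≤ a) :
    gfun a + gfun b < gfun (a ⊔ b) + gfun (a ⊓ b) := by
  have h1 : sfun a < sfun (a ⊔ b) := sfun_lt hba
  have h2 : sfun b < sfun (a ⊔ b) := by
    have := sfun_lt (a := b) (b := a) hab
    rwa [sup_comm] at this
  have h3 := sfun_add a b
  unfold gfun
  clear hab hba
  have hV : sfun (a ⊓ b) = sfun a + sfun b - sfun (a ⊔ b) := by linarith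
  rw [hV]
  nlinarith [mul_pos (sub_pos.mpr h1) (sub_pos.mpr h2)]

end Aux

/-- For a supermodular function `f` on a finite product of finite
linearly ordered sets, every probability distribution `μ` admits a distribution `ν`
with the same one-dimensional marginals, at least as large an expectation of `f`,
and chain support (with respect to the coordinatewise order). -/
theorem stmt_0 {I : Type*} [Fintype I] [DecidableEq I]
    (A : I → Type*) [∀ i, Fintype (A i)] [∀ i, LinearOrder (A i)]
    (f : (∀ i, A i) → ℝ)
    (hf : ∀ a b : ∀ i, A i, f a + f b ≤ f (a ⊔ b) + f (a ⊓ b))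
    (μ : (∀ i, A i) → ℝ) (hμ0 : ∀ a, 0 ≤ μ a) (hμ1 : ∑ a, μ a = 1) :
    ∃ ν : (∀ i, A i) → ℝ,
      (∀ a, 0 ≤ ν a) ∧ (∑ a, ν a = 1) ∧
      (∀ (i : I) (x : A i),
        ∑ a ∈ univ.filter (fun a : ∀ i, A i => a i = x), ν a
          = ∑ a ∈ univ.filter (fun a : ∀ i, A i => a i = x), μ a) ∧
      (∑ a, μ a * f a ≤ ∑ a, ν a * f a) ∧
      IsChain (· ≤ ·) {a : ∀ i, A i | 0 < ν a} := by
  classical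
  set F : ((∀ i, A i) → ℝ) → ℝ := fun ν => ∑ a, ν a * f a with hFdef
  set G : ((∀ i, A i) → ℝ) → ℝ := fun ν => ∑ a, ν a * gfun a with hGdef
  set S : Set ((∀ i, A i) → ℝ) := {ν | (∀ a, 0 ≤ ν a) ∧ (∑ a, ν a = 1) ∧
    ∀ (i : I) (x : A i), ∑ a ∈ univ.filter (fun a : ∀ i, A i => a i = x), ν a
      = ∑ a ∈ univ.filter (fun a : ∀ i, A i => a i = x), μ a} with hSdef
  have hμS : μ ∈ S := ⟨hμ0, hμ1, fun i x => rfl⟩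
  have hFcont : Continuous F :=
    continuous_finset_sum _ fun a _ => (continuous_apply a).mul continuous_const
  have hGcont : Continuous G :=
    continuous_finset_sum _ fun a _ => (continuous_apply a).mul continuous_const
  have hScl : IsClosed S := by
    have hrw : S = (⋂ a, {ν : (∀ i, A i) → ℝ | 0 ≤ ν a}) ∩
        ({ν : (∀ i, A i) → ℝ | ∑ a, ν a = 1} ∩
        ⋂ i, ⋂ x, {ν : (∀ i, A i) → ℝ |
          ∑ a ∈ univ.filter (fun a : ∀ i, A i => a i = x), ν a
            = ∑ a ∈ univ.filter (fun a : ∀ i, A i => a i = x), μ a}) := by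
      ext ν
      simp only [hSdef, Set.mem_setOf_eq, Set.mem_inter_iff, Set.mem_iInter]
    rw [hrw]
    exact (isClosed_iInter fun a => isClosed_le continuous_const (continuous_apply a)).inter
      ((isClosed_eq (continuous_finset_sum _ fun a _ => continuous_apply a)
        continuous_const).inter
        (isClosed_iInter fun i => isClosed_iInter fun x =>
          isClosed_eq (continuous_finset_sum _ fun a _ => continuous_apply a) continuous_const))
  have hScomp : IsCompact S := by
    refine IsCompact.of_isClosed_subset
      (isCompact_univ_pi fun _ => isCompact_Icc (a := (0:ℝ)) (b := 1)) hScl ?_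
    intro ν hν
    rw [Set.mem_univ_pi]
    intro a
    exact ⟨hν.1 a, by
      rw [← hν.2.1]
      exact Finset.single_le_sum (fun c _ => hν.1 c) (mem_univ a)⟩
  obtain ⟨ν₀, hν₀S, hν₀max⟩ := hScomp.exists_isMaxOn ⟨μ, hμS⟩ hFcont.continuousOn
  have hS'comp : IsCompact (S ∩ {ν | F ν = F ν₀}) :=
    hScomp.inter_right (isClosed_eq hFcont continuous_const)
  obtain ⟨ν₁, hν₁S', hν₁max⟩ := hS'comp.exists_isMaxOn ⟨ν₀, hν₀S, rfl⟩ hGcont.continuousOn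
  obtain ⟨hν₁S, hν₁F⟩ := hν₁S'
  obtain ⟨hν₁0, hν₁1, hν₁m⟩ := hν₁S
  have hν₁Smem : ν₁ ∈ S := ⟨hν₁0, hν₁1, hν₁m⟩
  have hFμ : F μ ≤ F ν₀ := isMaxOn_iff.mp hν₀max μ hμS
  refine ⟨ν₁, hν₁0, hν₁1, hν₁m, by rw [show (∑ a, ν₁ a * f a) = F ν₁ from rfl, hν₁F]; exact hFμ, ?_⟩
  -- chain support
  intro a ha b hb hne
  by_contra hcon
  push_neg at hcon
  obtain ⟨hab, hba⟩ := hcon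
  have ha' : 0 < ν₁ a := ha
  have hb' : 0 < ν₁ b := hb
  set ε : ℝ := min (ν₁ a) (ν₁ b) with hεdef
  have hε : 0 < ε := lt_min ha' hb'
  have hpa : a ⊔ b ≠ a := fun h => hba (h ▸ le_sup_right)
  have hpb : a ⊔ b ≠ b := fun h => hab (h ▸ le_sup_left)
  have hqa : a ⊓ b ≠ a := fun h => hab (h ▸ inf_le_right)
  have hqb : a ⊓ b ≠ b := fun h => hba (h ▸ inf_le_left)
  have hΔf0 := hf a b
  have hΔg0 := gfun_strict hab hba
  have hεa : ε ≤ ν₁ a := min_le_left _ _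
  have hεb : ε ≤ ν₁ b := min_le_right _ _
  clear hab hba hf
  have hΔf : 0 ≤ f (a ⊔ b) + f (a ⊓ b) - f a - f b := by linarith
  have hΔg : 0 < gfun (a ⊔ b) + gfun (a ⊓ b) - gfun a - gfun b := by linarith
  clear hΔf0 hΔg0
  set ν' : (∀ i, A i) → ℝ := fun c => ν₁ c + ε *
      ((if c = a ⊔ b then (1:ℝ) else 0) + (if c = a ⊓ b then 1 else 0)
        - (if c = a then 1 else 0) - (if c = b then 1 else 0)) with hν'def
  have hsum_ind : ∀ (t : Finset (∀ i, A i)) (p : (∀ i, A i)),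
      ∑ c ∈ t, (if c = p then (1:ℝ) else 0) = if p ∈ t then 1 else 0 := by
    intro t p; simp [Finset.sum_ite_eq']
  have hν'sum : ∀ t : Finset (∀ i, A i), ∑ c ∈ t, ν' c = ∑ c ∈ t, ν₁ c +
      ε * ((if a ⊔ b ∈ t then (1:ℝ) else 0) + (if a ⊓ b ∈ t then 1 else 0)
        - (if a ∈ t then 1 else 0) - (if b ∈ t then 1 else 0)) := by
    intro t
    simp only [hν'def]
    rw [Finset.sum_add_distrib, ← Finset.mul_sum]
    congr 2
    simp only [Finset.sum_sub_distrib, Finset.sum_add_distrib, hsum_ind]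
  have hw : ∀ (w : (∀ i, A i) → ℝ) (p : (∀ i, A i)),
      ∑ c, (if c = p then (1:ℝ) else 0) * w c = w p := by
    intro w p
    simp [ite_mul, Finset.sum_ite_eq']
  have hν'w : ∀ w : (∀ i, A i) → ℝ, ∑ c, ν' c * w c = ∑ c, ν₁ c * w c +
      ε * (w (a ⊔ b) + w (a ⊓ b) - w a - w b) := by
    intro w
    have hc : ∀ c, ν' c * w c = ν₁ c * w c +
        ε * ((if c = a ⊔ b then (1:ℝ) else 0) * w c + (if c = a ⊓ b then 1 else 0) * w c
          - (if c = a then 1 else 0) * w c - (if c = b then 1 else 0) * w c) := by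
      intro c; simp only [hν'def]; ring
    rw [Finset.sum_congr rfl fun c _ => hc c, Finset.sum_add_distrib, ← Finset.mul_sum]
    simp only [Finset.sum_sub_distrib, Finset.sum_add_distrib, hw]
  have hν'0 : ∀ c, 0 ≤ ν' c := by
    intro c
    rcases eq_or_ne c a with rfl | hca
    · have hval : ν' c = ν₁ c - ε := by
        simp only [hν'def, if_neg (Ne.symm hpa), if_neg (Ne.symm hqa), if_neg hne,
          eq_self_iff_true, if_true]
        ring
      rw [hval]
      linarith
    · rcases eq_or_ne c b with rfl | hcb
      · have hval : ν' c = ν₁ c - ε := by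
          simp only [hν'def, if_neg (Ne.symm hpb), if_neg (Ne.symm hqb), if_neg (Ne.symm hne),
            eq_self_iff_true, if_true]
          ring
        rw [hval]
        linarith
      · have hD : (0:ℝ) ≤ (if c = a ⊔ b then (1:ℝ) else 0) + (if c = a ⊓ b then 1 else 0)
            - (if c = a then 1 else 0) - (if c = b then 1 else 0) := by
          rw [if_neg hca, if_neg hcb]
          have h1 : (0:ℝ) ≤ if c = a ⊔ b then (1:ℝ) else 0 := by positivity
          have h2 : (0:ℝ) ≤ if c = a ⊓ b then (1:ℝ) else 0 := by positivity
          linarith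
        simp only [hν'def]
        have := mul_nonneg hε.le hD
        have := hν₁0 c
        linarith
  have hν'1 : ∑ c, ν' c = 1 := by
    rw [hν'sum univ]
    simp [hν₁1]
  have hν'm : ∀ (i : I) (x : A i),
      ∑ c ∈ univ.filter (fun c : ∀ i, A i => c i = x), ν' c
        = ∑ c ∈ univ.filter (fun c : ∀ i, A i => c i = x), μ c := by
    intro i x
    rw [hν'sum]
    have hcoord : ((if (a ⊔ b) i = x then (1:ℝ) else 0) + (if (a ⊓ b) i = x then 1 else 0))
        = ((if a i = x then (1:ℝ) else 0) + (if b i = x then 1 else 0)) := by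
      rcases le_total (a i) (b i) with h | h
      · rw [Pi.sup_apply, Pi.inf_apply, sup_eq_right.mpr h, inf_eq_left.mpr h, add_comm]
      · rw [Pi.sup_apply, Pi.inf_apply, sup_eq_left.mpr h, inf_eq_right.mpr h]
    simp only [mem_filter, mem_univ, true_and]
    rw [← hν₁m i x]
    have : ((if (a ⊔ b) i = x then (1:ℝ) else 0) + (if (a ⊓ b) i = x then 1 else 0)
        - (if a i = x then 1 else 0) - (if b i = x then 1 else 0)) = 0 := by
      linarith [hcoord]
    rw [this]
    ring
  have hν'S : ν' ∈ S := ⟨hν'0, hν'1, hν'm⟩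
  have hFν' : F ν' = F ν₁ + ε * (f (a ⊔ b) + f (a ⊓ b) - f a - f b) := hν'w f
  have hGν' : G ν' = G ν₁ + ε * (gfun (a ⊔ b) + gfun (a ⊓ b) - gfun a - gfun b) := hν'w gfun
  have hFle : F ν' ≤ F ν₀ := isMaxOn_iff.mp hν₀max ν' hν'S
  have hFeq : F ν' = F ν₀ := by
    have : F ν₁ ≤ F ν' := by nlinarith [mul_nonneg hε.le hΔf]
    rw [hν₁F] at this
    linarith
  have hGle : G ν' ≤ G ν₁ := isMaxOn_iff.mp hν₁max ν' ⟨hν'S, hFeq⟩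
  nlinarith [mul_pos hε hΔg]
end

section
/- Let A, B be finite sets, f : A × B → ℝ supermodular on the product of two finite linearly ordered sets, and μ a probability distribution on A × B. Define the 'uncrossing' operation at incomparable points a, b (with a ≱ b and b ≱ a): φ[μ|a,b] moves mass min(μ(a), μ(b)) from each of a and b to a⊔b and a⊓b. Then the expectation of f under φ[μ|a,b] is at least the expectation of f under μ, and φ[μ|a,b] has the same marginals as μ. -/
open Finset

/-- The uncrossing operation: move mass `min (μ a) (μ b)` from each of the
incomparable points `a`, `b` to their join and meet. -/
noncomputable def uncross {A B : Type*} [LinearOrder A] [LinearOrder B]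
    (μ : A × B → ℝ) (a b : A × B) : A × B → ℝ :=
  fun x =>
    if x = a ∨ x = b then μ x - min (μ a) (μ b)
    else if x = a ⊔ b ∨ x = a ⊓ b then μ x + min (μ a) (μ b)
    else μ x

lemma uncross_eq {A B : Type*} [LinearOrder A] [LinearOrder B]
    (μ : A × B → ℝ) (a b : A × B) (hab : ¬ b ≤ a) (hba : ¬ a ≤ b) (x : A × B) :
    uncross μ a b x = μ x + min (μ a) (μ b) *
      ((if x = a ⊔ b then (1:ℝ) else 0) + (if x = a ⊓ b then 1 else 0)
        - (if x = a then 1 else 0) - (if x = b then 1 else 0)) := by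
  have h1 : a ⊔ b ≠ a := fun h => hab (sup_eq_left.mp h)
  have h2 : a ⊔ b ≠ b := fun h => hba (sup_eq_right.mp h)
  have h3 : a ⊓ b ≠ a := fun h => hba (inf_eq_left.mp h)
  have h4 : a ⊓ b ≠ b := fun h => hab (inf_eq_right.mp h)
  have h6 : a ≠ b := fun h => hba h.le
  by_cases ha : x = a <;> by_cases hb : x = b <;>
    by_cases hs : x = a ⊔ b <;> by_cases hi : x = a ⊓ b <;>
    simp_all [uncross] <;> ring

lemma ind_row {A B : Type*} [Fintype B] [DecidableEq A] [DecidableEq B]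
    (c : A × B) (x : A) :
    ∑ y : B, (if (x, y) = c then (1:ℝ) else 0) = if x = c.1 then 1 else 0 := by
  simp [Prod.ext_iff, ite_and]

lemma ind_col {A B : Type*} [Fintype A] [DecidableEq A] [DecidableEq B]
    (c : A × B) (y : B) :
    ∑ x : A, (if (x, y) = c then (1:ℝ) else 0) = if y = c.2 then 1 else 0 := by
  simp [Prod.ext_iff, ite_and]

/-- Uncrossing at incomparable points does not decrease the expectation
of a supermodular function and preserves both marginals. -/
theorem stmt_1 {A B : Type*} [Fintype A] [Fintype B] [LinearOrder A] [LinearOrder B]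
    (f : A × B → ℝ)
    (hf : ∀ x y : A × B, f x + f y ≤ f (x ⊔ y) + f (x ⊓ y))
    (μ : A × B → ℝ) (hμ0 : ∀ x, 0 ≤ μ x) (hμ1 : ∑ x, μ x = 1)
    (a b : A × B) (hab : ¬ b ≤ a) (hba : ¬ a ≤ b) :
    (∑ x, μ x * f x ≤ ∑ x, uncross μ a b x * f x) ∧
    (∀ x : A, ∑ y : B, uncross μ a b (x, y) = ∑ y : B, μ (x, y)) ∧
    (∀ y : B, ∑ x : A, uncross μ a b (x, y) = ∑ x : A, μ (x, y)) := by
  have key := uncross_eq μ a b hab hba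
  have hm : (0:ℝ) ≤ min (μ a) (μ b) := le_min (hμ0 a) (hμ0 b)
  refine ⟨?_, ?_, ?_⟩
  · have hsum : ∑ x, uncross μ a b x * f x =
        (∑ x, μ x * f x) + min (μ a) (μ b) * (f (a ⊔ b) + f (a ⊓ b) - f a - f b) := by
      simp_rw [key, add_mul, Finset.sum_add_distrib, mul_assoc, ← Finset.mul_sum]
      congr 1
      congr 1
      simp_rw [sub_mul, add_mul, ite_mul, one_mul, zero_mul,
        Finset.sum_sub_distrib, Finset.sum_add_distrib]
      simp
    rw [hsum]
    have h0 : (0:ℝ) ≤ f (a ⊔ b) + f (a ⊓ b) - f a - f b := by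
      have := hf a b; clear hab hba; linarith
    have h1 := mul_nonneg hm h0
    clear hab hba
    linarith
  · intro x
    have : ∑ y : B, uncross μ a b (x, y) =
        (∑ y : B, μ (x, y)) + min (μ a) (μ b) *
          ((if x = (a ⊔ b).1 then (1:ℝ) else 0) + (if x = (a ⊓ b).1 then 1 else 0)
            - (if x = a.1 then 1 else 0) - (if x = b.1 then 1 else 0)) := by
      simp_rw [key, Finset.sum_add_distrib, ← Finset.mul_sum]
      congr 2
      simp_rw [Finset.sum_sub_distrib, Finset.sum_add_distrib,
        ind_row (a ⊔ b) x, ind_row (a ⊓ b) x, ind_row a x, ind_row b x]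
    rw [this]
    rcases le_total a.1 b.1 with h | h <;>
      simp [Prod.fst_sup, Prod.fst_inf, sup_eq_right.mpr h, inf_eq_left.mpr h,
        sup_eq_left.mpr h, inf_eq_right.mpr h] <;> ring
  · intro y
    have : ∑ x : A, uncross μ a b (x, y) =
        (∑ x : A, μ (x, y)) + min (μ a) (μ b) *
          ((if y = (a ⊔ b).2 then (1:ℝ) else 0) + (if y = (a ⊓ b).2 then 1 else 0)
            - (if y = a.2 then 1 else 0) - (if y = b.2 then 1 else 0)) := by
      simp_rw [key, Finset.sum_add_distrib, ← Finset.mul_sum]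
      congr 2
      simp_rw [Finset.sum_sub_distrib, Finset.sum_add_distrib,
        ind_col (a ⊔ b) y, ind_col (a ⊓ b) y, ind_col a y, ind_col b y]
    rw [this]
    rcases le_total a.2 b.2 with h | h <;>
      simp [Prod.snd_sup, Prod.snd_inf, sup_eq_right.mpr h, inf_eq_left.mpr h,
        sup_eq_left.mpr h, inf_eq_right.mpr h] <;> ring
end

section
/- Let each A_i = {0,1} with 0 < 1, let the game be supermodular (for each θ and each player i, u_i((1,a_{-i}),θ) − u_i((0,a_{-i}),θ) is nondecreasing in a_{-i} coordinatewise). Suppose there exist v : A × Θ → ℝ and constants λ_i > 0 with λ_i(u_i((1,a_{-i}),θ) − u_i((0,a_{-i}),θ)) ≥ v((1,a_{-i}),θ) − v((0,a_{-i}),θ) for all a_{-i}, θ. Let P, Q be probability distributions on A_{-i} × Θ with the same marginal on Θ, such that for each θ the conditional of P on A_{-i} first-order stochastically dominates that of Q. If ∑_{a_{-i},θ} Q(a_{-i},θ)(v((1,a_{-i}),θ) − v((0,a_{-i}),θ)) ≥ 0, then ∑_{a_{-i},θ} P(a_{-i},θ)(u_i((1,a_{-i}),θ) − u_i((0,a_{-i}),θ))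 ≥ 0. -/
set_option linter.unusedVariables false


lemma key_fosd {A : Type*} [Fintype A] [PartialOrder A] [Nonempty A]
    (d : A → ℝ)
    (hd : ∀ B : Finset A, (∀ a ∈ B, ∀ a', a ≤ a' → a' ∈ B) → 0 ≤ ∑ a ∈ B, d a) :
    ∀ n (g : A → ℝ), Monotone g → (∀ a, 0 ≤ g a) →
      (Finset.univ.image g).card ≤ n → 0 ≤ ∑ a, d a * g a := by
  classical
  intro n
  induction n with
  | zero =>
    intro g _ _ hc
    have h1 : (Finset.univ.image g).Nonempty := (Finset.univ_nonempty).image g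
    have := Finset.card_pos.mpr h1
    omega
  | succ n ih =>
    intro g hg hg0 hc
    by_cases hsmall : (Finset.univ.image g).card ≤ n
    · exact ih g hg hg0 hsmall
    have hne : (Finset.univ.image g).Nonempty := (Finset.univ_nonempty).image g
    set M := (Finset.univ.image g).max' hne with hM
    have hMmem : M ∈ Finset.univ.image g := (Finset.univ.image g).max'_mem hne
    have hMle : ∀ a, g a ≤ M := fun a =>
      Finset.le_max' _ _ (Finset.mem_image_of_mem g (Finset.mem_univ a))
    have hM0 : 0 ≤ M := by
      obtain ⟨a, -, ha⟩ := Finset.mem_image.mp hMmem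
      exact ha ▸ hg0 a
    by_cases hconst : ∀ a, g a = M
    · have h0 := hd Finset.univ (fun a _ a' _ => Finset.mem_univ a')
      calc (0:ℝ) ≤ (∑ a, d a) * M := mul_nonneg h0 hM0
        _ = ∑ a, d a * g a := by
            rw [Finset.sum_mul]
            exact Finset.sum_congr rfl fun a _ => by rw [hconst a]
    · push_neg at hconst
      obtain ⟨a₀, ha₀⟩ := hconst
      have hSne : ((Finset.univ.image g).erase M).Nonempty :=
        ⟨g a₀, Finset.mem_erase.mpr ⟨ha₀, Finset.mem_image_of_mem g (Finset.mem_univ a₀)⟩⟩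
      set c := ((Finset.univ.image g).erase M).max' hSne with hcdef
      have hcmem : c ∈ (Finset.univ.image g).erase M := Finset.max'_mem _ hSne
      have hcneM : c ≠ M := (Finset.mem_erase.mp hcmem).1
      have hc0 : 0 ≤ c := by
        obtain ⟨a, -, ha⟩ := Finset.mem_image.mp (Finset.mem_of_mem_erase hcmem)
        exact ha ▸ hg0 a
      have hcM : c ≤ M := Finset.le_max' _ _ (Finset.mem_of_mem_erase hcmem)
      have hle_c : ∀ a, g a ≠ M → g a ≤ c := fun a ha =>
        Finset.le_max' _ _ (Finset.mem_erase.mpr ⟨ha, Finset.mem_image_of_mem g (Finset.mem_univ a)⟩)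
      set g' := fun a => min (g a) c with hg'def
      have hg'mon : Monotone g' := hg.min monotone_const
      have hg'0 : ∀ a, 0 ≤ g' a := fun a => le_min (hg0 a) hc0
      have himg : Finset.univ.image g' ⊆ (Finset.univ.image g).erase M := by
        intro x hx
        obtain ⟨a, -, ha⟩ := Finset.mem_image.mp hx
        by_cases h : g a = M
        · have : g' a = c := by
            simp only [hg'def, h]; exact min_eq_right hcM
          rw [← ha, this]; exact hcmem
        · have hgc : g a ≤ c := hle_c a h
          have : g' a = g a := min_eq_left hgc
          rw [← ha, this]
          exact Finset.mem_erase.mpr ⟨h, Finset.mem_image_of_mem g (Finset.mem_univ a)⟩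
      have hcard : (Finset.univ.image g').card ≤ n := by
        have h1 := Finset.card_le_card himg
        have h2 : ((Finset.univ.image g).erase M).card = (Finset.univ.image g).card - 1 :=
          Finset.card_erase_of_mem hMmem
        omega
      have h1 := ih g' hg'mon hg'0 hcard
      set B := Finset.univ.filter (fun a => M ≤ g a) with hB
      have hBup : ∀ a ∈ B, ∀ a', a ≤ a' → a' ∈ B := by
        intro a ha a' haa'
        simp only [hB, Finset.mem_filter, Finset.mem_univ, true_and] at ha ⊢
        exact ha.trans (hg haa')
      have h2 := hd B hBup
      have hsplit : ∑ a, d a * g a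
          = ∑ a, d a * g' a + (M - c) * ∑ a ∈ B, d a := by
        rw [hB, Finset.mul_sum, Finset.sum_filter, ← Finset.sum_add_distrib]
        refine Finset.sum_congr rfl fun a _ => ?_
        by_cases h : M ≤ g a
        · have hgaM : g a = M := le_antisymm (hMle a) h
          have : g' a = c := by simp only [hg'def, hgaM]; exact min_eq_right hcM
          rw [if_pos h, this, hgaM]; ring
        · have hgc : g a ≤ c := hle_c a (fun hEq => h (le_of_eq hEq.symm))
          have : g' a = g a := min_eq_left hgc
          rw [if_neg h, this]; ring
      rw [hsplit]
      have := mul_nonneg (sub_nonneg.mpr hcM) h2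
      linarith

lemma fosd_exp {A : Type*} [Fintype A] [PartialOrder A] [Nonempty A]
    (p q f : A → ℝ) (hf : Monotone f)
    (hpq : ∀ B : Finset A, (∀ a ∈ B, ∀ a', a ≤ a' → a' ∈ B) →
      ∑ a ∈ B, q a ≤ ∑ a ∈ B, p a)
    (htot : ∑ a, p a = ∑ a, q a) :
    ∑ a, q a * f a ≤ ∑ a, p a * f a := by
  classical
  set d := fun a => p a - q a with hd
  have hdB : ∀ B : Finset A, (∀ a ∈ B, ∀ a', a ≤ a' → a' ∈ B) → 0 ≤ ∑ a ∈ B, d a := by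
    intro B hB
    have := hpq B hB
    simp only [hd, Finset.sum_sub_distrib]
    linarith
  have hne : (Finset.univ.image f).Nonempty := (Finset.univ_nonempty).image f
  set m := (Finset.univ.image f).min' hne with hm
  set g := fun a => f a - m with hg
  have hgmon : Monotone g := fun a a' h => by
    simp only [hg]; exact sub_le_sub_right (hf h) m
  have hg0 : ∀ a, 0 ≤ g a := fun a => by
    simp only [hg, sub_nonneg]
    exact Finset.min'_le _ _ (Finset.mem_image_of_mem f (Finset.mem_univ a))
  have hkey := key_fosd d hdB (Finset.univ.image g).card g hgmon hg0 le_rfl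
  have hd0 : ∑ a, d a = 0 := by
    simp only [hd, Finset.sum_sub_distrib]; linarith
  have hexp : ∑ a, d a * g a = ∑ a, d a * f a - m * ∑ a, d a := by
    rw [Finset.mul_sum, ← Finset.sum_sub_distrib]
    exact Finset.sum_congr rfl fun a _ => by simp only [hg]; ring
  rw [hexp, hd0, mul_zero, sub_zero] at hkey
  have : ∑ a, d a * f a = ∑ a, p a * f a - ∑ a, q a * f a := by
    rw [← Finset.sum_sub_distrib]
    exact Finset.sum_congr rfl fun a _ => by simp only [hd]; ring
  linarith [hkey, this]

/-- In a binary-action supermodular game with a monotone-potential-type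
inequality `λᵢ(uᵢ(1,·)−uᵢ(0,·)) ≥ v(1,·)−v(0,·)`, if `P` conditionally first-order
stochastically dominates `Q` (state by state, with equal state marginals) and the
expected `v`-difference under `Q` is nonnegative, then the expected `uᵢ`-difference
under `P` is nonnegative. Here player `i`'s opponents are indexed by `J`, actions
are `Bool` (`0 = false`, `1 = true`). -/
theorem stmt_7 {J : Type*} [Fintype J] [DecidableEq J]
    {Θ : Type*} [Countable Θ]
    (u v : Bool → (J → Bool) → Θ → ℝ) (lam : ℝ) (hlam : 0 < lam)
    (hsuper : ∀ (θ : Θ) (a a' : J → Bool), a ≤ a' →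
      u true a θ - u false a θ ≤ u true a' θ - u false a' θ)
    (hmp : ∀ (a : J → Bool) (θ : Θ),
      v true a θ - v false a θ ≤ lam * (u true a θ - u false a θ))
    (hub : ∃ C, ∀ b a θ, |u b a θ| ≤ C) (hvb : ∃ C, ∀ b a θ, |v b a θ| ≤ C)
    (P Q : ((J → Bool) × Θ) → ℝ)
    (hP0 : ∀ x, 0 ≤ P x) (hPs : Summable P) (hP1 : ∑' x, P x = 1)
    (hQ0 : ∀ x, 0 ≤ Q x) (hQs : Summable Q) (hQ1 : ∑' x, Q x = 1)
    (hmarg : ∀ θ : Θ, ∑ a : J → Bool, P (a, θ) = ∑ a : J → Bool, Q (a, θ))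
    (hFOSD : ∀ (θ : Θ) (B : Finset (J → Bool)),
      (∀ a ∈ B, ∀ a', a ≤ a' → a' ∈ B) →
      ∑ a ∈ B, Q (a, θ) ≤ ∑ a ∈ B, P (a, θ))
    (hQv : 0 ≤ ∑' θ : Θ, ∑ a : J → Bool, Q (a, θ) * (v true a θ - v false a θ)) :
    0 ≤ ∑' θ : Θ, ∑ a : J → Bool, P (a, θ) * (u true a θ - u false a θ) := by
  classical
  cases isEmpty_or_nonempty Θ with
  | inl h => simp [tsum_empty]
  | inr hΘ =>
  obtain ⟨C, hC⟩ := hub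
  obtain ⟨D, hD⟩ := hvb
  set F := fun θ : Θ => ∑ a : J → Bool, P (a, θ) * (u true a θ - u false a θ) with hF
  set G := fun θ : Θ => ∑ a : J → Bool, Q (a, θ) * (v true a θ - v false a θ) with hG
  -- summability of fibers
  have hinj : ∀ a : J → Bool, Function.Injective (fun θ : Θ => ((a, θ) : (J → Bool) × Θ)) := by
    intro a θ θ' h
    simpa using congrArg Prod.snd h
  have hPf : Summable (fun θ : Θ => ∑ a : J → Bool, P (a, θ)) := by
    exact summable_sum fun a _ => hPs.comp_injective (hinj a)
  have hQf : Summable (fun θ : Θ => ∑ a : J → Bool, Q (a, θ)) := by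
    exact summable_sum fun a _ => hQs.comp_injective (hinj a)
  -- bounds
  have hFb : ∀ θ, |F θ| ≤ (2 * C) * ∑ a : J → Bool, P (a, θ) := by
    intro θ
    calc |F θ| ≤ ∑ a : J → Bool, |P (a, θ) * (u true a θ - u false a θ)| :=
          Finset.abs_sum_le_sum_abs _ _
      _ ≤ ∑ a : J → Bool, P (a, θ) * (2 * C) := by
          refine Finset.sum_le_sum fun a _ => ?_
          rw [abs_mul, abs_of_nonneg (hP0 _)]
          refine mul_le_mul_of_nonneg_left ?_ (hP0 _)
          calc |u true a θ - u false a θ| ≤ |u true a θ| + |u false a θ| := abs_sub _ _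
            _ ≤ 2 * C := by have := hC true a θ; have := hC false a θ; linarith
      _ = (2 * C) * ∑ a : J → Bool, P (a, θ) := by
          rw [Finset.mul_sum]; exact Finset.sum_congr rfl fun a _ => mul_comm _ _
  have hGb : ∀ θ, |G θ| ≤ (2 * D) * ∑ a : J → Bool, Q (a, θ) := by
    intro θ
    calc |G θ| ≤ ∑ a : J → Bool, |Q (a, θ) * (v true a θ - v false a θ)| :=
          Finset.abs_sum_le_sum_abs _ _
      _ ≤ ∑ a : J → Bool, Q (a, θ) * (2 * D) := by
          refine Finset.sum_le_sum fun a _ => ?_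
          rw [abs_mul, abs_of_nonneg (hQ0 _)]
          refine mul_le_mul_of_nonneg_left ?_ (hQ0 _)
          calc |v true a θ - v false a θ| ≤ |v true a θ| + |v false a θ| := abs_sub _ _
            _ ≤ 2 * D := by have := hD true a θ; have := hD false a θ; linarith
      _ = (2 * D) * ∑ a : J → Bool, Q (a, θ) := by
          rw [Finset.mul_sum]; exact Finset.sum_congr rfl fun a _ => mul_comm _ _
  have hFs : Summable F := by
    rw [← summable_abs_iff]
    exact Summable.of_nonneg_of_le (fun θ => abs_nonneg _) hFb (hPf.mul_left (2 * C))
  have hGs : Summable G := by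
    rw [← summable_abs_iff]
    exact Summable.of_nonneg_of_le (fun θ => abs_nonneg _) hGb (hQf.mul_left (2 * D))
  -- pointwise inequality G θ ≤ lam * F θ
  have hGF : ∀ θ, G θ ≤ lam * F θ := by
    intro θ
    have step1 : G θ ≤ lam * ∑ a : J → Bool, Q (a, θ) * (u true a θ - u false a θ) := by
      rw [Finset.mul_sum]
      refine Finset.sum_le_sum fun a _ => ?_
      calc Q (a, θ) * (v true a θ - v false a θ)
          ≤ Q (a, θ) * (lam * (u true a θ - u false a θ)) :=
            mul_le_mul_of_nonneg_left (hmp a θ) (hQ0 _)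
        _ = lam * (Q (a, θ) * (u true a θ - u false a θ)) := by ring
    have step2 : ∑ a : J → Bool, Q (a, θ) * (u true a θ - u false a θ) ≤ F θ := by
      exact fosd_exp (fun a => P (a, θ)) (fun a => Q (a, θ))
        (fun a => u true a θ - u false a θ)
        (fun a a' h => hsuper θ a a' h) (hFOSD θ) (hmarg θ)
    calc G θ ≤ lam * ∑ a : J → Bool, Q (a, θ) * (u true a θ - u false a θ) := step1
      _ ≤ lam * F θ := mul_le_mul_of_nonneg_left step2 hlam.le
  have h1 : ∑' θ, G θ ≤ ∑' θ, lam * F θ :=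
    Summable.tsum_le_tsum hGF hGs (hFs.mul_left lam)
  rw [tsum_mul_left] at h1
  have h2 : 0 ≤ lam * ∑' θ, F θ := le_trans hQv h1
  nlinarith [hlam, h2]
end

section
/- Let P_i be a probability distribution on A_{-i} × 𝒜_{-i} × Θ with P_i(a_{-i}, X_{-i}, θ) = 0 whenever a_{-i} ∉ X_{-i}, where A_j = {0,1} and 𝒜_j = {{0,1},{1}} for each j. Define Λ_j(1) = {1}, Λ_j(0) = {0,1}. Then for every θ and every increasing subset B ⊆ A_{-i}, ∑_{a_{-i}∈B} P_i(Λ_{-i}(a_{-i}), θ) ≤ ∑_{a_{-i}∈B} P_i(a_{-i}, θ); i.e., the action-marginal conditional on θ first-order stochastically dominates the pullback under Λ of the signal-marginal. -/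
/-- Actions of the opponents are `a : J → Bool` and signals
`X : J → Bool`, where the signal bit `true` encodes `{1}` and `false` encodes `{0,1}`,
so that the map `Λ` is the identity under this encoding and the feasibility constraint
`a₋ᵢ ∈ X₋ᵢ` reads `X ≤ a` pointwise. For a distribution `P` supported on feasible
pairs, for every `θ` and every increasing subset `B` of `J → Bool`, the signal-marginal
mass of `B` is at most the action-marginal mass of `B`: the action marginal first-order
stochastically dominates the pullback under `Λ` of the signal marginal. -/
theorem stmt_8 {J : Type*} [Fintype J] [DecidableEq J] {Θ : Type*} [Countable Θ]
    (P : ((J → Bool) × (J → Bool) × Θ) → ℝ)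
    (hP0 : ∀ x, 0 ≤ P x) (hPs : Summable P) (hP1 : ∑' x, P x = 1)
    (hsupp : ∀ (a x : J → Bool) (θ : Θ), ¬ x ≤ a → P (a, x, θ) = 0)
    (θ : Θ) (B : Finset (J → Bool))
    (hB : ∀ a ∈ B, ∀ a', a ≤ a' → a' ∈ B) :
    ∑ x ∈ B, ∑ a : J → Bool, P (a, x, θ) ≤ ∑ a ∈ B, ∑ x : J → Bool, P (a, x, θ) := by
  classical
  rw [Finset.sum_comm]
  have h1 : ∑ a : J → Bool, ∑ x ∈ B, P (a, x, θ)
      = ∑ p ∈ (Finset.univ ×ˢ B).filter (fun p : (J→Bool)×(J→Bool) => p.2 ≤ p.1),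
          P (p.1, p.2, θ) := by
    rw [Finset.sum_filter, Finset.sum_product]
    refine Finset.sum_congr rfl fun a _ => Finset.sum_congr rfl fun x _ => ?_
    by_cases h : x ≤ a
    · simp [h]
    · simp [h, hsupp a x θ h]
  have h2 : ∑ a ∈ B, ∑ x : J → Bool, P (a, x, θ)
      = ∑ p ∈ B ×ˢ Finset.univ, P (p.1, p.2, θ) := by rw [Finset.sum_product]
  rw [h1, h2]
  apply Finset.sum_le_sum_of_subset_of_nonneg
  · intro p hp
    simp only [Finset.mem_filter, Finset.mem_product, Finset.mem_univ, and_true,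
      true_and] at hp ⊢
    exact hB p.2 hp.1 p.1 hp.2
  · intro p _ _; exact hP0 _
end

section
/- Let Σ^{BI} ∘ π = { σ∘π ∈ Δ(A × T × Θ) : σ∘π(a,t,θ) = σ(a|t,θ)π(t,θ), σ belief-invariant } where A is finite and T, Θ are countable with prior π ∈ Δ(T × Θ). Then Σ^{BI} ∘ π is a tight, convex, ℓ¹-closed subset of Δ(A × T × Θ); in particular it is compact in the ℓ¹-norm topology. -/
namespace Stmt13

open Topology Filter

/-- The point space `A × T × Θ` of action profiles, type profiles and states. -/
abbrev Space (I : Type*) (A T : I → Type*) (Θ : Type*) : Type _ :=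
  (∀ i, A i) × (∀ i, T i) × Θ

/-- A decision rule `σ` is belief-invariant (w.r.t. prior `π`) if the marginal
probability of player `i`'s action given his own type does not depend on the
opponents' types or the state, on the support of `π`. -/
def BeliefInvariant {I : Type*} [Fintype I] [DecidableEq I]
    {A T : I → Type*} [∀ i, Fintype (A i)] [∀ i, DecidableEq (A i)] {Θ : Type*}
    (π : ((∀ i, T i) × Θ) → ℝ)
    (σ : ((∀ i, T i) × Θ) → (∀ i, A i) → ℝ) : Prop :=
  ∀ (i : I) (ai : A i) (t t' : ∀ i, T i) (θ θ' : Θ),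
    π (t, θ) ≠ 0 → π (t', θ') ≠ 0 → t i = t' i →
      ∑ a ∈ Finset.univ.filter (fun a : ∀ i, A i => a i = ai), σ (t, θ) a
        = ∑ a ∈ Finset.univ.filter (fun a : ∀ i, A i => a i = ai), σ (t', θ') a

/-- The set `Σ^{BI} ∘ π` of belief-invariant distributional decision rules, viewed
as a subset of `ℓ¹(A × T × Θ)`. -/
def BIset {I : Type*} [Fintype I] [DecidableEq I]
    (A T : I → Type*) [∀ i, Fintype (A i)] [∀ i, DecidableEq (A i)] (Θ : Type*)
    (π : ((∀ i, T i) × Θ) → ℝ) :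
    Set (lp (fun _ : Space I A T Θ => ℝ) 1) :=
  { μ | ∃ σ : ((∀ i, T i) × Θ) → (∀ i, A i) → ℝ,
      (∀ x a, 0 ≤ σ x a) ∧ (∀ x, ∑ a, σ x a = 1) ∧
      BeliefInvariant π σ ∧
      ∀ x : Space I A T Θ, μ x = σ (x.2.1, x.2.2) x.1 * π (x.2.1, x.2.2) }

noncomputable def clamp (r : ℝ) : ℝ := max 0 (min 1 r)

lemma clamp_nonneg (r : ℝ) : 0 ≤ clamp r := le_max_left _ _

lemma clamp_le_one (r : ℝ) : clamp r ≤ 1 := max_le zero_le_one (min_le_left _ _)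

lemma clamp_eq {r : ℝ} (h0 : 0 ≤ r) (h1 : r ≤ 1) : clamp r = r := by
  unfold clamp; rw [min_eq_right h1, max_eq_right h0]

lemma clamp_lipschitz (r s : ℝ) : |clamp r - clamp s| ≤ |r - s| := by
  unfold clamp
  refine (abs_max_sub_max_le_max _ _ _ _).trans ?_
  have := abs_min_sub_min_le_max (1:ℝ) r 1 s
  simp only [sub_self, abs_zero] at this ⊢
  refine max_le (by positivity) (this.trans ?_)
  simp [abs_nonneg]

lemma norm_lp_one {α : Type*} (f : lp (fun _ : α => ℝ) 1) : ‖f‖ = ∑' x, |f x| := by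
  rw [lp.norm_eq_tsum_rpow (by simp) f]
  simp [Real.norm_eq_abs]

lemma summable_abs_lp_one {α : Type*} (f : lp (fun _ : α => ℝ) 1) :
    Summable (fun x => |f x|) := by
  have h := (lp.memℓp f).summable (p := 1) (by simp)
  simpa [Real.norm_eq_abs] using h

lemma summable_snd {α β : Type*} [Fintype α] {f : β → ℝ} (hf0 : ∀ b, 0 ≤ f b)
    (hf : Summable f) : Summable (fun p : α × β => f p.2) := by
  refine (summable_prod_of_nonneg (fun p => hf0 p.2)).2 ⟨fun a => hf, ?_⟩
  exact Summable.of_finite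

lemma tsum_snd {α β : Type*} [Fintype α] {f : β → ℝ} (hf0 : ∀ b, 0 ≤ f b)
    (hf : Summable f) :
    ∑' p : α × β, f p.2 = (Fintype.card α : ℝ) * ∑' b, f b := by
  rw [(summable_snd hf0 hf).tsum_prod' (fun a => hf)]
  show (∑' (_ : α), ∑' c : β, f c) = _
  rw [tsum_fintype, Finset.sum_const, nsmul_eq_mul]
  rfl

section Phi

variable {I : Type*} [Fintype I] [DecidableEq I]
  {A T : I → Type*} [∀ i, Fintype (A i)] [∀ i, DecidableEq (A i)] {Θ : Type*}
  (π : ((∀ i, T i) × Θ) → ℝ)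

noncomputable def PhiFun (σ : ((∀ i, T i) × Θ) → (∀ i, A i) → ℝ) :
    Space I A T Θ → ℝ := fun x => clamp (σ x.2 x.1) * π x.2

lemma phiFun_memℓp (hπ0 : ∀ x, 0 ≤ π x) (hπs : Summable π)
    (σ : ((∀ i, T i) × Θ) → (∀ i, A i) → ℝ) :
    Memℓp (PhiFun π σ) (1 : ENNReal) := by
  apply memℓp_gen
  have hs : Summable (fun x : Space I A T Θ => π x.2) := summable_snd hπ0 hπs
  simp only [ENNReal.toReal_one, Real.rpow_one]
  refine Summable.of_nonneg_of_le (fun x => norm_nonneg _) (fun x => ?_) hs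
  show |clamp (σ x.2 x.1) * π x.2| ≤ π x.2
  calc |clamp (σ x.2 x.1) * π x.2| = clamp (σ x.2 x.1) * π x.2 :=
        abs_of_nonneg (mul_nonneg (clamp_nonneg _) (hπ0 _))
    _ ≤ 1 * π x.2 := mul_le_mul_of_nonneg_right (clamp_le_one _) (hπ0 _)
    _ = π x.2 := one_mul _

noncomputable def Phi (hπ0 : ∀ x, 0 ≤ π x) (hπs : Summable π)
    (σ : ((∀ i, T i) × Θ) → (∀ i, A i) → ℝ) : lp (fun _ : Space I A T Θ => ℝ) 1 :=
  ⟨PhiFun π σ, phiFun_memℓp π hπ0 hπs σ⟩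

lemma Phi_apply (hπ0 : ∀ x, 0 ≤ π x) (hπs : Summable π)
    (σ : ((∀ i, T i) × Θ) → (∀ i, A i) → ℝ) (x : Space I A T Θ) :
    (Phi π hπ0 hπs σ : Space I A T Θ → ℝ) x = clamp (σ x.2 x.1) * π x.2 := rfl

lemma phi_continuous (hπ0 : ∀ x, 0 ≤ π x) (hπs : Summable π) (hπ1 : ∑' x, π x = 1) :
    Continuous (Phi (A := A) π hπ0 hπs) := by
  rw [continuous_iff_continuousAt]
  intro σ0
  rw [ContinuousAt, Metric.tendsto_nhds]
  intro ε hε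
  set N : ℝ := (Fintype.card (∀ i, A i) : ℝ) with hN
  have hN0 : 0 ≤ N := Nat.cast_nonneg _
  have hη : (0:ℝ) < ε / (8 * (N + 1)) := by positivity
  obtain ⟨S, hS⟩ : ∃ S : Finset ((∀ i, T i) × Θ),
      1 - ε / (8 * (N + 1)) < ∑ d ∈ S, π d := by
    have h := hπs.hasSum
    rw [hπ1] at h
    exact (h.eventually (eventually_gt_nhds (by linarith))).exists
  have hδpos : (0:ℝ) < ε / (4 * (N + 1)) := by positivity
  set δ : ℝ := ε / (4 * (N + 1)) with hδdef
  have hev : ∀ᶠ σ in 𝓝 σ0, ∀ d ∈ S, ∀ a : (∀ i, A i), |σ d a - σ0 d a| < δ := by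
    rw [Filter.eventually_all_finset]
    intro d _
    rw [Filter.eventually_all]
    intro a
    have hc : Filter.Tendsto (fun σ : ((∀ i, T i) × Θ) → (∀ i, A i) → ℝ => σ d a)
        (nhds σ0) (nhds (σ0 d a)) :=
      ((continuous_apply a).comp (continuous_apply d)).tendsto σ0
    filter_upwards [hc (Metric.ball_mem_nhds _ hδpos)] with σ hσ
    simpa [Real.dist_eq] using hσ
  filter_upwards [hev] with σ hσ
  rw [dist_eq_norm, norm_lp_one]
  set g : Space I A T Θ → ℝ :=
    fun x => |clamp (σ x.2 x.1) - clamp (σ0 x.2 x.1)| * π x.2 with hg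
  have habs : ∀ x : Space I A T Θ,
      |(Phi π hπ0 hπs σ - Phi π hπ0 hπs σ0) x| = g x := by
    intro x
    have h1 : (Phi π hπ0 hπs σ - Phi π hπ0 hπs σ0) x
        = clamp (σ x.2 x.1) * π x.2 - clamp (σ0 x.2 x.1) * π x.2 := by
      simp only [lp.coeFn_sub, Pi.sub_apply]
      rfl
    rw [h1, ← sub_mul, abs_mul, abs_of_nonneg (hπ0 _)]
  rw [tsum_congr habs]
  have hs : Summable (fun x : Space I A T Θ => π x.2) := summable_snd hπ0 hπs
  have hgle : ∀ x : Space I A T Θ, g x ≤ 2 * π x.2 := by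
    intro x
    have hcl : |clamp (σ x.2 x.1) - clamp (σ0 x.2 x.1)| ≤ 2 := by
      have h1 : |clamp (σ x.2 x.1) - clamp (σ0 x.2 x.1)|
          ≤ |clamp (σ x.2 x.1)| + |clamp (σ0 x.2 x.1)| := abs_sub _ _
      have h2 : |clamp (σ x.2 x.1)| ≤ 1 := by
        rw [abs_of_nonneg (clamp_nonneg _)]; exact clamp_le_one _
      have h3 : |clamp (σ0 x.2 x.1)| ≤ 1 := by
        rw [abs_of_nonneg (clamp_nonneg _)]; exact clamp_le_one _
      linarith
    exact mul_le_mul_of_nonneg_right hcl (hπ0 _)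
  have hg0 : ∀ x, 0 ≤ g x := fun x => mul_nonneg (abs_nonneg _) (hπ0 _)
  have hgsum : Summable g :=
    Summable.of_nonneg_of_le hg0 hgle (hs.mul_left 2)
  set K : Finset (Space I A T Θ) := (Finset.univ : Finset (∀ i, A i)) ×ˢ S with hK
  rw [← Summable.sum_add_tsum_compl (s := K) hgsum]
  -- partial sums of π over S
  have hSle1 : ∑ d ∈ S, π d ≤ 1 := by
    have := hπs.sum_le_tsum S (fun i _ => hπ0 i)
    rwa [hπ1] at this
  have hKsum : ∑ x ∈ K, π x.2 = N * ∑ d ∈ S, π d := by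
    rw [hK, Finset.sum_product]
    show (∑ _a : (∀ i, A i), ∑ d ∈ S, π d) = _
    rw [Finset.sum_const, nsmul_eq_mul, hN]
    rfl
  -- part 1
  have hpart1 : ∑ x ∈ K, g x ≤ δ * N := by
    have h1 : ∑ x ∈ K, g x ≤ ∑ x ∈ K, δ * π x.2 := by
      refine Finset.sum_le_sum fun x hx => ?_
      have hx2 : x.2 ∈ S := (Finset.mem_product.mp hx).2
      have hlt : |σ x.2 x.1 - σ0 x.2 x.1| < δ := hσ x.2 hx2 x.1
      exact mul_le_mul_of_nonneg_right
        ((clamp_lipschitz _ _).trans hlt.le) (hπ0 _)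
    rw [← Finset.mul_sum, hKsum] at h1
    calc ∑ x ∈ K, g x ≤ δ * (N * ∑ d ∈ S, π d) := h1
      _ ≤ δ * (N * 1) := by
          apply mul_le_mul_of_nonneg_left _ hδpos.le
          exact mul_le_mul_of_nonneg_left hSle1 hN0
      _ = δ * N := by ring
  -- part 2
  have htotal : ∑' x : Space I A T Θ, π x.2 = N := by
    rw [tsum_snd hπ0 hπs, hπ1, mul_one]
  have hcompl : ∑' x : ((K : Set (Space I A T Θ))ᶜ : Set (Space I A T Θ)), π (x : Space I A T Θ).2
      = N - N * ∑ d ∈ S, π d := by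
    have h := Summable.sum_add_tsum_compl (s := K) hs
    rw [htotal, hKsum] at h
    linarith
  have hpart2 : ∑' x : ((K : Set (Space I A T Θ))ᶜ : Set (Space I A T Θ)), g x
      ≤ 2 * (N - N * ∑ d ∈ S, π d) := by
    have h1 : ∑' x : ((K : Set (Space I A T Θ))ᶜ : Set (Space I A T Θ)), g x
        ≤ ∑' x : ((K : Set (Space I A T Θ))ᶜ : Set (Space I A T Θ)), 2 * π (x : Space I A T Θ).2 := by
      refine (hgsum.subtype _).tsum_le_tsum (fun x => hgle x) ((hs.mul_left 2).subtype _)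
    rw [tsum_mul_left, hcompl] at h1
    exact h1
  have hNle : N * (1 - ∑ d ∈ S, π d) ≤ N * (ε / (8 * (N + 1))) := by
    apply mul_le_mul_of_nonneg_left _ hN0
    linarith
  have hbound1 : δ * N ≤ ε / 4 := by
    rw [hδdef]
    rw [div_mul_eq_mul_div, div_le_div_iff₀ (by positivity) (by norm_num)]
    nlinarith
  have hbound2 : 2 * (N - N * ∑ d ∈ S, π d) ≤ ε / 4 := by
    have hfrac : N * (ε / (8 * (N + 1))) ≤ ε / 8 := by
      rw [mul_div_assoc']
      rw [div_le_div_iff₀ (by positivity) (by norm_num)]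
      nlinarith
    nlinarith [hNle]
  linarith [hpart1, hpart2]

end Phi

lemma isClosed_imp {X : Type*} [TopologicalSpace X] {p : Prop} {s : Set X}
    (hs : IsClosed s) : IsClosed {x | p → x ∈ s} := by
  by_cases hp : p
  · simpa [hp] using hs
  · simp [hp]

section Main

variable {I : Type*} [Fintype I] [DecidableEq I]
  (A T : I → Type*) [∀ i, Fintype (A i)] [∀ i, DecidableEq (A i)] (Θ : Type*)
  (π : ((∀ i, T i) × Θ) → ℝ)

/-- The compact set of (clamped) decision rules. -/
def Cset : Set (((∀ i, T i) × Θ) → (∀ i, A i) → ℝ) :=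
  {σ | (∀ d a, 0 ≤ σ d a) ∧ (∀ d, ∑ a, σ d a = 1) ∧ BeliefInvariant π σ}

lemma cset_isClosed : IsClosed (Cset A T Θ π) := by
  have hev : ∀ (d : (∀ i, T i) × Θ) (a : ∀ i, A i),
      Continuous fun σ : ((∀ i, T i) × Θ) → (∀ i, A i) → ℝ => σ d a :=
    fun d a => (continuous_apply a).comp (continuous_apply d)
  have h1 : IsClosed {σ : ((∀ i, T i) × Θ) → (∀ i, A i) → ℝ | ∀ d a, 0 ≤ σ d a} := by
    have he : {σ : ((∀ i, T i) × Θ) → (∀ i, A i) → ℝ | ∀ d a, 0 ≤ σ d a}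
        = ⋂ d, ⋂ a, {σ | 0 ≤ σ d a} := by
      ext σ; simp [Set.mem_iInter]
    rw [he]
    exact isClosed_iInter fun d => isClosed_iInter fun a =>
      isClosed_le continuous_const (hev d a)
  have h2 : IsClosed {σ : ((∀ i, T i) × Θ) → (∀ i, A i) → ℝ | ∀ d, ∑ a, σ d a = 1} := by
    have he : {σ : ((∀ i, T i) × Θ) → (∀ i, A i) → ℝ | ∀ d, ∑ a, σ d a = 1}
        = ⋂ d, {σ | ∑ a, σ d a = 1} := by
      ext σ; simp [Set.mem_iInter]
    rw [he]
    exact isClosed_iInter fun d =>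
      isClosed_eq (continuous_finset_sum _ fun a _ => hev d a) continuous_const
  have h3 : IsClosed {σ : ((∀ i, T i) × Θ) → (∀ i, A i) → ℝ | BeliefInvariant π σ} := by
    have he : {σ : ((∀ i, T i) × Θ) → (∀ i, A i) → ℝ | BeliefInvariant π σ}
        = ⋂ (i : I), ⋂ (ai : A i), ⋂ (t : ∀ i, T i), ⋂ (t' : ∀ i, T i), ⋂ (θ : Θ), ⋂ (θ' : Θ),
          {σ : ((∀ i, T i) × Θ) → (∀ i, A i) → ℝ |
            π (t, θ) ≠ 0 → π (t', θ') ≠ 0 → t i = t' i →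
              ∑ a ∈ Finset.univ.filter (fun a : ∀ i, A i => a i = ai), σ (t, θ) a
                = ∑ a ∈ Finset.univ.filter (fun a : ∀ i, A i => a i = ai), σ (t', θ') a} := by
      ext σ; simp [BeliefInvariant, Set.mem_iInter]
    rw [he]
    refine isClosed_iInter fun i => isClosed_iInter fun ai => isClosed_iInter fun t =>
      isClosed_iInter fun t' => isClosed_iInter fun θ => isClosed_iInter fun θ' => ?_
    exact isClosed_imp (isClosed_imp (isClosed_imp (isClosed_eq
      (continuous_finset_sum _ fun a _ => hev (t, θ) a)
      (continuous_finset_sum _ fun a _ => hev (t', θ') a))))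
  have he : Cset A T Θ π = _ ∩ (_ ∩ _) := rfl
  exact (h1.inter (h2.inter h3))

lemma cset_isCompact : IsCompact (Cset A T Θ π) := by
  have hB : IsCompact {σ : ((∀ i, T i) × Θ) → (∀ i, A i) → ℝ |
      ∀ d a, σ d a ∈ Set.Icc (0:ℝ) 1} := by
    have he : {σ : ((∀ i, T i) × Θ) → (∀ i, A i) → ℝ | ∀ d a, σ d a ∈ Set.Icc (0:ℝ) 1}
        = Set.pi Set.univ (fun _ : (∀ i, T i) × Θ =>
            Set.pi Set.univ fun _ : ∀ i, A i => Set.Icc (0:ℝ) 1) := by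
      ext σ
      simp only [Set.mem_setOf_eq, Set.mem_pi, Set.mem_univ, Set.mem_Icc, forall_const]
    rw [he]
    exact isCompact_univ_pi fun d => isCompact_univ_pi fun a => isCompact_Icc
  refine hB.of_isClosed_subset (cset_isClosed A T Θ π) ?_
  rintro σ ⟨h0, h1, -⟩ 
  intro d a
  refine ⟨h0 d a, ?_⟩
  have hle := Finset.single_le_sum (f := σ d) (fun a _ => h0 d a) (Finset.mem_univ a)
  rw [h1 d] at hle
  exact hle

end Main


lemma biset_eq {I : Type*} [Fintype I] [DecidableEq I]
    (A T : I → Type*) [∀ i, Fintype (A i)] [∀ i, DecidableEq (A i)] (Θ : Type*)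
    (π : ((∀ i, T i) × Θ) → ℝ) (hπ0 : ∀ x, 0 ≤ π x) (hπs : Summable π) :
    BIset A T Θ π = Phi (A := A) π hπ0 hπs '' Cset A T Θ π := by
  ext μ
  constructor
  · rintro ⟨σ, h0, h1, hBI, hcoord⟩
    refine ⟨σ, ⟨h0, h1, hBI⟩, ?_⟩
    apply lp.ext
    funext x
    have hle : σ x.2 x.1 ≤ 1 := by
      have h := Finset.single_le_sum (f := σ x.2) (fun a _ => h0 x.2 a) (Finset.mem_univ x.1)
      rw [h1 x.2] at h
      exact h
    show clamp (σ x.2 x.1) * π x.2 = μ x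
    rw [clamp_eq (h0 _ _) hle]
    exact (hcoord x).symm
  · rintro ⟨σ, ⟨h0, h1, hBI⟩, rfl⟩
    refine ⟨σ, h0, h1, hBI, fun x => ?_⟩
    have hle : σ x.2 x.1 ≤ 1 := by
      have h := Finset.single_le_sum (f := σ x.2) (fun a _ => h0 x.2 a) (Finset.mem_univ x.1)
      rw [h1 x.2] at h
      exact h
    show clamp (σ x.2 x.1) * π x.2 = σ (x.2.1, x.2.2) x.1 * π (x.2.1, x.2.2)
    rw [clamp_eq (h0 _ _) hle]

/-- `Σ^{BI} ∘ π` is a tight, convex, `ℓ¹`-closed subset of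
`Δ(A × T × Θ)`; in particular it is compact in the `ℓ¹`-norm topology. -/
theorem stmt_13 {I : Type*} [Fintype I] [DecidableEq I]
    (A T : I → Type*) [∀ i, Fintype (A i)] [∀ i, DecidableEq (A i)]
    [∀ i, Countable (T i)] (Θ : Type*) [Countable Θ]
    (π : ((∀ i, T i) × Θ) → ℝ)
    (hπ0 : ∀ x, 0 ≤ π x) (hπs : Summable π) (hπ1 : ∑' x, π x = 1) :
    (∀ ε > (0 : ℝ), ∃ K : Finset (Space I A T Θ),
        ∀ μ ∈ BIset A T Θ π, 1 - ε < ∑ x ∈ K, μ x) ∧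
    Convex ℝ (BIset A T Θ π) ∧
    IsClosed (BIset A T Θ π) ∧
    IsCompact (BIset A T Θ π) := by

  have hcomp : IsCompact (BIset A T Θ π) := by
    rw [biset_eq A T Θ π hπ0 hπs]
    exact (cset_isCompact A T Θ π).image (phi_continuous π hπ0 hπs hπ1)
  refine ⟨?_, ?_, hcomp.isClosed, hcomp⟩
  · -- tightness
    intro ε hε
    obtain ⟨S, hS⟩ : ∃ S : Finset ((∀ i, T i) × Θ), 1 - ε < ∑ d ∈ S, π d := by
      have h := hπs.hasSum
      rw [hπ1] at h
      exact (h.eventually (eventually_gt_nhds (by linarith))).exists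
    refine ⟨(Finset.univ : Finset (∀ i, A i)) ×ˢ S, ?_⟩
    rintro μ ⟨σ, h0, h1, hBI, hcoord⟩
    have heq : ∑ x ∈ (Finset.univ : Finset (∀ i, A i)) ×ˢ S, μ x = ∑ d ∈ S, π d := by
      rw [Finset.sum_congr rfl (fun x _ => hcoord x)]
      rw [Finset.sum_product]
      rw [Finset.sum_comm]
      refine Finset.sum_congr rfl fun d _ => ?_
      show ∑ a, σ d a * π d = π d
      rw [← Finset.sum_mul, h1 d, one_mul]
    rw [heq]
    exact hS
  · -- convexity
    rintro μ ⟨σ, hσ0, hσ1, hσBI, hσc⟩ ν ⟨τ, hτ0, hτ1, hτBI, hτc⟩ a b ha hb hab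
    refine ⟨fun d p => a * σ d p + b * τ d p, ?_, ?_, ?_, ?_⟩
    · intro d p
      exact add_nonneg (mul_nonneg ha (hσ0 d p)) (mul_nonneg hb (hτ0 d p))
    · intro d
      rw [Finset.sum_add_distrib, ← Finset.mul_sum, ← Finset.mul_sum, hσ1 d, hτ1 d]
      simpa using hab
    · intro i ai t t' θ θ' hne hne' hti
      rw [Finset.sum_add_distrib, Finset.sum_add_distrib, ← Finset.mul_sum,
        ← Finset.mul_sum, ← Finset.mul_sum, ← Finset.mul_sum,
        hσBI i ai t t' θ θ' hne hne' hti, hτBI i ai t t' θ θ' hne hne' hti]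
    · intro x
      have hx : (a • μ + b • ν) x = a * μ x + b * ν x := by
        simp [lp.coeFn_add, lp.coeFn_smul, Pi.add_apply, Pi.smul_apply, smul_eq_mul]
        rfl
      rw [hx, hσc x, hτc x]
      ring


end Stmt13
end

section
/- Let σ be a belief-invariant decision rule in a game where each A_i is finite and linearly ordered, and for each (t,θ) the support of σ(·|t,θ) is a chain in the product order. Then the maximum element of the support of σ(·|t,θ) equals the profile (max supp σ_i(·|t_i))_{i∈I} and the minimum element equals (min supp σ_i(·|t_i))_{i∈I}, where σ_i(·|t_i) is player i's marginal. -/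
open Finset

namespace Stmt16

/-- Belief-invariance of a decision rule with respect to the prior `π`. -/
def BeliefInvariant {I : Type*} [Fintype I] [DecidableEq I]
    {A T : I → Type*} [∀ i, Fintype (A i)] [∀ i, DecidableEq (A i)] {Θ : Type*}
    (π : ((∀ i, T i) × Θ) → ℝ)
    (σ : ((∀ i, T i) × Θ) → (∀ i, A i) → ℝ) : Prop :=
  ∀ (i : I) (ai : A i) (t t' : ∀ i, T i) (θ θ' : Θ),
    π (t, θ) ≠ 0 → π (t', θ') ≠ 0 → t i = t' i →
      ∑ a ∈ univ.filter (fun a : ∀ i, A i => a i = ai), σ (t, θ) a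
        = ∑ a ∈ univ.filter (fun a : ∀ i, A i => a i = ai), σ (t', θ') a

/-- Let `σ` be a belief-invariant decision rule whose support at
each `(t,θ)` is a chain in the product order. Then the maximum element of the support
of `σ(·|t,θ)` is the profile of the maxima of the marginal supports, and similarly
for the minimum. -/
theorem stmt_16 {I : Type*} [Fintype I] [DecidableEq I]
    (A : I → Type*) [∀ i, Fintype (A i)] [∀ i, LinearOrder (A i)]
    (T : I → Type*) (Θ : Type*)
    (π : ((∀ i, T i) × Θ) → ℝ)
    (σ : ((∀ i, T i) × Θ) → (∀ i, A i) → ℝ)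
    (hσ0 : ∀ x a, 0 ≤ σ x a) (hσ1 : ∀ x, ∑ a, σ x a = 1)
    (hBI : BeliefInvariant π σ)
    (hchain : ∀ x, IsChain (· ≤ ·) {a : ∀ i, A i | 0 < σ x a})
    (x : (∀ i, T i) × Θ) (hx : π x ≠ 0) :
    (∃ m : ∀ i, A i, 0 < σ x m ∧ (∀ a, 0 < σ x a → a ≤ m) ∧
      ∀ i : I, (0 < ∑ a ∈ univ.filter (fun a : ∀ i, A i => a i = m i), σ x a) ∧
        ∀ ai : A i, (0 < ∑ a ∈ univ.filter (fun a : ∀ i, A i => a i = ai), σ x a) →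
          ai ≤ m i) ∧
    (∃ m : ∀ i, A i, 0 < σ x m ∧ (∀ a, 0 < σ x a → m ≤ a) ∧
      ∀ i : I, (0 < ∑ a ∈ univ.filter (fun a : ∀ i, A i => a i = m i), σ x a) ∧
        ∀ ai : A i, (0 < ∑ a ∈ univ.filter (fun a : ∀ i, A i => a i = ai), σ x a) →
          m i ≤ ai) := by
  classical
  have hsupp : ∀ (i : I) (ai : A i),
      (0 < ∑ a ∈ univ.filter (fun a : ∀ i, A i => a i = ai), σ x a) →
      ∃ a : ∀ i, A i, 0 < σ x a ∧ a i = ai := by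
    intro i ai hpos
    by_contra h
    push_neg at h
    have : ∑ a ∈ univ.filter (fun a : ∀ i, A i => a i = ai), σ x a = 0 := by
      apply Finset.sum_eq_zero
      intro a ha
      simp only [mem_filter, mem_univ, true_and] at ha
      rcases lt_or_eq_of_le (hσ0 x a) with h1 | h1
      · exact absurd ha (h a h1)
      · exact h1.symm
    simp [this] at hpos
  have hmarg : ∀ (m : ∀ i, A i), 0 < σ x m → ∀ i : I,
      0 < ∑ a ∈ univ.filter (fun a : ∀ i, A i => a i = m i), σ x a := by
    intro m hm i
    apply Finset.sum_pos' (fun a _ => hσ0 x a)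
    exact ⟨m, by simp, hm⟩
  -- support is nonempty
  have hne : ∃ a, 0 < σ x a := by
    by_contra h
    push_neg at h
    have : ∑ a, σ x a = 0 := Finset.sum_eq_zero fun a _ =>
      le_antisymm (h a) (hσ0 x a)
    rw [hσ1 x] at this; norm_num at this
  set S : Finset (∀ i, A i) := univ.filter (fun a => 0 < σ x a) with hS
  have hSne : S.Nonempty := by
    obtain ⟨a, ha⟩ := hne
    exact ⟨a, by simp [hS, ha]⟩
  constructor
  · obtain ⟨m, hmS, hmax⟩ := S.exists_maximal hSne
    simp only [hS, mem_filter, mem_univ, true_and] at hmS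
    have hle : ∀ a, 0 < σ x a → a ≤ m := by
      intro a ha
      rcases eq_or_ne a m with rfl | hne'
      · exact le_refl a
      · rcases hchain x hmS ha (Ne.symm hne') with h1 | h1
        · exact absurd (h1.lt_of_ne (Ne.symm hne')) (fun hlt => lt_irrefl a (lt_of_le_of_lt (hmax (by simp [hS, ha]) hlt.le) hlt))
        · exact h1
    refine ⟨m, hmS, hle, fun i => ⟨hmarg m hmS i, fun ai hai => ?_⟩⟩
    obtain ⟨a, ha, rfl⟩ := hsupp i ai hai
    exact hle a ha i
  · obtain ⟨m, hmS, hmin⟩ := S.exists_minimal hSne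
    simp only [hS, mem_filter, mem_univ, true_and] at hmS
    have hle : ∀ a, 0 < σ x a → m ≤ a := by
      intro a ha
      rcases eq_or_ne a m with rfl | hne'
      · exact le_refl a
      · rcases hchain x hmS ha (Ne.symm hne') with h1 | h1
        · exact h1
        · exact absurd (h1.lt_of_ne hne') (fun hlt => lt_irrefl a (lt_of_lt_of_le hlt (hmin (by simp [hS, ha]) hlt.le)))
    refine ⟨m, hmS, hle, fun i => ⟨hmarg m hmS i, fun ai hai => ?_⟩⟩
    obtain ⟨a, ha, rfl⟩ := hsupp i ai hai
    exact hle a ha i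

end Stmt16
end
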